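/- arXiv:2408.14476 — 3 statements merged into one kernel-verified Lean document; each statement's English description precedes it below -/
import Mathlib

section
/- Consider an individual with skill n > 0 facing the piecewise-linear tax t with parameters α ≥ 0, β1, β2 ∈ (0,1], kink y1 > 0, in the convex case β1 ≥ β2. If n ≥ n2 = √(y1/β2), then the function l ↦ u(nl − t(nl), l) = (nl − t(nl)) − l²/2 attains its maximum over l ≥ 0 at l = β2·n, the maximal utility value equals α + β2²n²/2 − y1(β2−β1), and the tax paid at the optimum equals −α + (1−β2)β2n² + (β2−β1)y1. -/
/-!
For `β2 ≤ β1` the tax is convex: it is the maximum of its two affine pieces, so it dominates the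
upper-bracket line everywhere. Replacing the tax by that line gives the concave upper bound
`α + (β1 - β2) y1 + β2 n l - l² / 2` on utility, maximised at `l = β2 n`. When `n ≥ √(y1 / β2)`
the income `β2 n²` earned there lies in the upper bracket, where tax and line agree, so the bound
is attained.
-/

open MeasureTheory Set

/-- Piecewise-linear two-bracket tax with subsidy `α`, retained proportions `β1, β2`
and kink point `y1`. -/
noncomputable def tax (α β1 β2 y1 y : ℝ) : ℝ :=
  if y ≤ y1 then -α + (1 - β1) * y
  else -α + (1 - β1) * y1 + (1 - β2) * (y - y1)

theorem tax_of_le_kink {α β1 β2 y1 y : ℝ} (hy : y1 ≤ y) :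
    tax α β1 β2 y1 y = -α + (1 - β1) * y1 + (1 - β2) * (y - y1) := by
  unfold tax
  split_ifs with h
  · rw [le_antisymm h hy]; ring
  · rfl

theorem upper_bracket_le_tax {α β1 β2 y1 : ℝ} (hβ : β2 ≤ β1) (y : ℝ) :
    -α + (1 - β1) * y1 + (1 - β2) * (y - y1) ≤ tax α β1 β2 y1 y := by
  unfold tax
  split_ifs with h
  · nlinarith
  · rfl

theorem kink_le_of_sqrt_le {β y1 n : ℝ} (hβ : 0 < β) (hn : √(y1 / β) ≤ n) :
    y1 ≤ β * n ^ 2 :=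
  (div_le_iff₀' hβ).mp (Real.sqrt_le_iff.mp hn).2

theorem stmt3_general (α β1 β2 y1 n : ℝ)
    (hβ2 : β2 ∈ Set.Ioc (0:ℝ) 1)
    (hcase : β2 ≤ β1)
    (hn2 : Real.sqrt (y1 / β2) ≤ n) :
    IsMaxOn (fun l => (n * l - tax α β1 β2 y1 (n * l)) - l ^ 2 / 2) (Set.Ici 0) (β2 * n) ∧
    (n * (β2 * n) - tax α β1 β2 y1 (n * (β2 * n))) - (β2 * n) ^ 2 / 2
      = α + β2 ^ 2 * n ^ 2 / 2 - y1 * (β2 - β1) ∧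
    tax α β1 β2 y1 (n * (β2 * n)) = -α + (1 - β2) * β2 * n ^ 2 + (β2 - β1) * y1 := by
  have hkink : y1 ≤ n * (β2 * n) := by
    linarith [kink_le_of_sqrt_le hβ2.1 hn2]
  have htax := tax_of_le_kink (α := α) (β1 := β1) (β2 := β2) hkink
  have hval : (n * (β2 * n) - tax α β1 β2 y1 (n * (β2 * n))) - (β2 * n) ^ 2 / 2
      = α + β2 ^ 2 * n ^ 2 / 2 - y1 * (β2 - β1) := by
    rw [htax]; ring
  refine ⟨fun l _ => ?_, hval, by rw [htax]; ring⟩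
  have hline := upper_bracket_le_tax (α := α) (y1 := y1) hcase (n * l)
  simp only [mem_ofPred_eq, hval]
  nlinarith [sq_nonneg (l - β2 * n)]

/-- Convex case `β1 ≥ β2`, `n ≥ n2 = √(y1 / β2)`: the optimal effort is `β2 n`,
the maximal utility is `α + β2² n² / 2 - y1 (β2 - β1)`, and the tax paid is
`-α + (1 - β2) β2 n² + (β2 - β1) y1`. -/
theorem stmt3 (α β1 β2 y1 n : ℝ)
    (hα : 0 ≤ α) (hβ1 : β1 ∈ Set.Ioc (0:ℝ) 1) (hβ2 : β2 ∈ Set.Ioc (0:ℝ) 1)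
    (hy1 : 0 < y1) (hcase : β2 ≤ β1) (hn : 0 < n)
    (hn2 : Real.sqrt (y1 / β2) ≤ n) :
    IsMaxOn (fun l => (n * l - tax α β1 β2 y1 (n * l)) - l ^ 2 / 2) (Set.Ici 0) (β2 * n) ∧
    (n * (β2 * n) - tax α β1 β2 y1 (n * (β2 * n))) - (β2 * n) ^ 2 / 2
      = α + β2 ^ 2 * n ^ 2 / 2 - y1 * (β2 - β1) ∧
    tax α β1 β2 y1 (n * (β2 * n)) = -α + (1 - β2) * β2 * n ^ 2 + (β2 - β1) * y1 :=
  stmt3_general α β1 β2 y1 n hβ2 hcase hn2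
end

section
/- Consider an individual with skill n > 0 facing the piecewise-linear tax t with parameters α ≥ 0, β1, β2 ∈ (0,1], kink y1 > 0, in the convex case β1 ≥ β2. If n1 ≤ n ≤ n2 where n1 = √(y1/β1) and n2 = √(y1/β2), then the function l ↦ u(nl − t(nl), l) = (nl − t(nl)) − l²/2 attains its maximum over l ≥ 0 at l = y1/n, the maximal utility value equals α + β1y1 − y1²/(2n²), and the tax paid at the optimum equals −α + (1−β1)y1. -/
open MeasureTheory Set

/-!
Below the kink, `y = n l ≤ y1`, utility is `α + β1 n l - l²/2`, a parabola with
vertex `β1 n`; above it, utility is `α + (β1 - β2) y1 + β2 n l - l²/2`, with vertex `β2 n`.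
The hypothesis `n1 ≤ n ≤ n2` says exactly `β2 n ≤ y1 / n ≤ β1 n`, so utility increases up to
the kink effort `y1 / n` and decreases after it.
-/

section Tax

variable (α β1 β2 y1 : ℝ) {y : ℝ}

theorem tax_of_le (h : y ≤ y1) : tax α β1 β2 y1 y = -α + (1 - β1) * y := if_pos h

theorem tax_of_ge (h : y1 ≤ y) :
    tax α β1 β2 y1 y = -α + (1 - β1) * y1 + (1 - β2) * (y - y1) := by
  rcases h.eq_or_lt with rfl | hlt
  · simp [tax]
  · exact if_neg hlt.not_ge

end Tax

noncomputable def utility (α β1 β2 y1 n l : ℝ) : ℝ :=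
  (n * l - tax α β1 β2 y1 (n * l)) - l ^ 2 / 2

section Utility

variable (α β1 β2 y1 : ℝ) {n l : ℝ}

theorem utility_of_mul_le (h : n * l ≤ y1) :
    utility α β1 β2 y1 n l = α + (β1 * n * l - l ^ 2 / 2) := by
  rw [utility, tax_of_le _ _ _ _ h]
  ring

theorem utility_of_le_mul (h : y1 ≤ n * l) :
    utility α β1 β2 y1 n l = α + (β1 - β2) * y1 + (β2 * n * l - l ^ 2 / 2) := by
  rw [utility, tax_of_ge _ _ _ _ h]
  ring

end Utility

section Parabola

variable {b l m : ℝ}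

theorem mul_sub_sq_div_two_le_of_le_of_le (hlm : l ≤ m) (hmb : m ≤ b) :
    b * l - l ^ 2 / 2 ≤ b * m - m ^ 2 / 2 := by
  nlinarith [mul_nonneg (sub_nonneg.2 hlm) (by linarith : 0 ≤ 2 * b - l - m)]

theorem mul_sub_sq_div_two_le_of_le_of_ge (hbm : b ≤ m) (hml : m ≤ l) :
    b * l - l ^ 2 / 2 ≤ b * m - m ^ 2 / 2 := by
  nlinarith [mul_nonneg (sub_nonneg.2 hml) (by linarith : 0 ≤ l + m - 2 * b)]

end Parabola

section SkillBounds

variable {y β n : ℝ}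

theorem div_le_mul_of_sqrt_div_le (hβ : 0 < β) (hn : 0 < n) (h : √(y / β) ≤ n) :
    y / n ≤ β * n := by
  rw [Real.sqrt_le_left hn.le, div_le_iff₀ hβ] at h
  rw [div_le_iff₀ hn]
  linarith

theorem mul_le_div_of_le_sqrt_div (hβ : 0 < β) (hn : 0 < n) (h : n ≤ √(y / β)) :
    β * n ≤ y / n := by
  rw [Real.le_sqrt' hn, le_div_iff₀ hβ] at h
  rw [le_div_iff₀ hn]
  linarith

end SkillBounds

theorem isMaxOn_utility_kink {α β1 β2 y1 n : ℝ} (hn : 0 < n)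
    (hlow : β2 * n ≤ y1 / n) (hhigh : y1 / n ≤ β1 * n) :
    IsMaxOn (utility α β1 β2 y1 n) univ (y1 / n) := by
  have hkink : n * (y1 / n) = y1 := mul_div_cancel₀ y1 hn.ne'
  intro l _
  rcases le_total (n * l) y1 with hl | hl
  · have hlm : l ≤ y1 / n := by rwa [le_div_iff₀ hn, mul_comm]
    show utility α β1 β2 y1 n l ≤ utility α β1 β2 y1 n (y1 / n)
    rw [utility_of_mul_le _ _ _ _ hl, utility_of_mul_le _ _ _ _ hkink.le]
    linarith [mul_sub_sq_div_two_le_of_le_of_le hlm hhigh]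
  · have hml : y1 / n ≤ l := by rwa [div_le_iff₀ hn, mul_comm]
    show utility α β1 β2 y1 n l ≤ utility α β1 β2 y1 n (y1 / n)
    rw [utility_of_le_mul _ _ _ _ hl, utility_of_le_mul _ _ _ _ hkink.ge]
    linarith [mul_sub_sq_div_two_le_of_le_of_ge hlow hml]

theorem stmt4_general (α β1 β2 y1 n : ℝ)
    (hβ1 : β1 ∈ Set.Ioc (0:ℝ) 1) (hβ2 : β2 ∈ Set.Ioc (0:ℝ) 1)
    (hn : 0 < n)
    (hn1 : Real.sqrt (y1 / β1) ≤ n) (hn2 : n ≤ Real.sqrt (y1 / β2)) :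
    IsMaxOn (fun l => (n * l - tax α β1 β2 y1 (n * l)) - l ^ 2 / 2) (Set.Ici 0) (y1 / n) ∧
    (n * (y1 / n) - tax α β1 β2 y1 (n * (y1 / n))) - (y1 / n) ^ 2 / 2
      = α + β1 * y1 - y1 ^ 2 / (2 * n ^ 2) ∧
    tax α β1 β2 y1 (n * (y1 / n)) = -α + (1 - β1) * y1 := by
  have hkink : n * (y1 / n) = y1 := mul_div_cancel₀ y1 hn.ne'
  have hmax : IsMaxOn (utility α β1 β2 y1 n) univ (y1 / n) :=
    isMaxOn_utility_kink hn (mul_le_div_of_le_sqrt_div hβ2.1 hn hn2)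
      (div_le_mul_of_sqrt_div_le hβ1.1 hn hn1)
  refine ⟨hmax.on_subset (subset_univ _), ?_, by rw [hkink, tax_of_le _ _ _ _ le_rfl]⟩
  rw [hkink, tax_of_le _ _ _ _ le_rfl]
  field_simp
  ring

/-- Convex case `β1 ≥ β2`, `n1 ≤ n ≤ n2` with `n1 = √(y1 / β1)`, `n2 = √(y1 / β2)`:
the optimal effort is `y1 / n`, the maximal utility is `α + β1 y1 - y1² / (2 n²)`,
and the tax paid is `-α + (1 - β1) y1`. -/
theorem stmt4 (α β1 β2 y1 n : ℝ)
    (hα : 0 ≤ α) (hβ1 : β1 ∈ Set.Ioc (0:ℝ) 1) (hβ2 : β2 ∈ Set.Ioc (0:ℝ) 1)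
    (hy1 : 0 < y1) (hcase : β2 ≤ β1) (hn : 0 < n)
    (hn1 : Real.sqrt (y1 / β1) ≤ n) (hn2 : n ≤ Real.sqrt (y1 / β2)) :
    IsMaxOn (fun l => (n * l - tax α β1 β2 y1 (n * l)) - l ^ 2 / 2) (Set.Ici 0) (y1 / n) ∧
    (n * (y1 / n) - tax α β1 β2 y1 (n * (y1 / n))) - (y1 / n) ^ 2 / 2
      = α + β1 * y1 - y1 ^ 2 / (2 * n ^ 2) ∧
    tax α β1 β2 y1 (n * (y1 / n)) = -α + (1 - β1) * y1 :=
  stmt4_general α β1 β2 y1 n hβ1 hβ2 hn hn1 hn2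
end

section
/- For β2 ∈ (0,1] fixed and kink y1 > 0 fixed, the function β1 ↦ U(β1,β2) := ∫₀^{n3(β1)} (β1 − β1²/2) n² f(n) dn + ∫_{n3(β1)}^∞ (β2 − β2²/2) n² f(n) dn, where n3(β1) = √(2y1/(β1+β2)), is nondecreasing in β1 on the interval (0, β2]. -/
/-!
Raising the lower rate `β1` toward `β2` moves the kink threshold `n3 = √(2 y1 / (β1 + β2))`
down. Individuals below the new threshold gain because `β ↦ β - β²/2` is increasing on
`(-∞, 1]`; those between the new and the old threshold switch from the coefficient
`β1 - β1²/2` to the larger `β2 - β2²/2`; everybody else is unaffected.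
-/

open MeasureTheory Set

lemma monotoneOn_sub_sq_div_two : MonotoneOn (fun β : ℝ => β - β ^ 2 / 2) (Iic 1) := by
  intro a ha b hb hab
  simp only [mem_Iic] at ha hb
  nlinarith

lemma antitoneOn_sqrt_div_add {c d : ℝ} (hc : 0 ≤ c) :
    AntitoneOn (fun x : ℝ => Real.sqrt (c / (x + d))) (Ioi (-d)) := by
  intro a ha b _ hab
  simp only [mem_Ioi] at ha
  exact Real.sqrt_le_sqrt (div_le_div_of_nonneg_left hc (by linarith) (by linarith))

lemma setIntegral_Ioc_add_setIntegral_Ioi_le {g : ℝ → ℝ} {a c c' d t t' : ℝ}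
    (hg : IntegrableOn g (Ioi a)) (hg_nonneg : ∀ x ∈ Ioi a, 0 ≤ g x)
    (hat' : a ≤ t') (ht : t' ≤ t) (hc : c ≤ c') (hcd : c ≤ d) :
    (∫ x in Ioc a t, c * g x) + ∫ x in Ioi t, d * g x
      ≤ (∫ x in Ioc a t', c' * g x) + ∫ x in Ioi t', d * g x := by
  have hlow : IntegrableOn g (Ioc a t') := hg.mono_set fun x hx => hx.1
  have hmid : IntegrableOn g (Ioc t' t) := hg.mono_set fun x hx => hat'.trans_lt hx.1
  have hhigh : IntegrableOn g (Ioi t) := hg.mono_set fun x hx => (hat'.trans ht).trans_lt hx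
  have hsplit_low : ∫ x in Ioc a t, g x = (∫ x in Ioc a t', g x) + ∫ x in Ioc t' t, g x := by
    rw [← Ioc_union_Ioc_eq_Ioc hat' ht,
      setIntegral_union (Ioc_disjoint_Ioc_of_le le_rfl) measurableSet_Ioc hlow hmid]
  have hsplit_high : ∫ x in Ioi t', g x = (∫ x in Ioc t' t, g x) + ∫ x in Ioi t, g x := by
    rw [← Ioc_union_Ioi_eq_Ioi ht,
      setIntegral_union Ioc_disjoint_Ioi_same measurableSet_Ioi hmid hhigh]
  have hlow_nonneg : 0 ≤ ∫ x in Ioc a t', g x :=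
    setIntegral_nonneg measurableSet_Ioc fun x hx => hg_nonneg x hx.1
  have hmid_nonneg : 0 ≤ ∫ x in Ioc t' t, g x :=
    setIntegral_nonneg measurableSet_Ioc fun x hx => hg_nonneg x (hat'.trans_lt hx.1)
  simp only [integral_const_mul, hsplit_low, hsplit_high]
  nlinarith [mul_le_mul_of_nonneg_right hc hlow_nonneg, mul_le_mul_of_nonneg_right hcd hmid_nonneg]

theorem stmt10_general (β2 y1 : ℝ) (f : ℝ → ℝ)
    (hβ2 : β2 ∈ Set.Ioc (0:ℝ) 1) (hy1 : 0 < y1)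
    (hf_nonneg : ∀ n ∈ Set.Ioi (0:ℝ), 0 ≤ f n)
    (hf2 : IntegrableOn (fun n => n ^ 2 * f n) (Set.Ioi 0)) :
    MonotoneOn (fun β1 =>
      (∫ n in Set.Ioc (0:ℝ) (Real.sqrt (2 * y1 / (β1 + β2))),
          (β1 - β1 ^ 2 / 2) * n ^ 2 * f n)
      + ∫ n in Set.Ioi (Real.sqrt (2 * y1 / (β1 + β2))),
          (β2 - β2 ^ 2 / 2) * n ^ 2 * f n)
      (Set.Ioc 0 β2) := by
  intro a ha b hb hab
  have ha_le_one : a ≤ 1 := ha.2.trans hβ2.2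
  have mem_dom : ∀ β ∈ Ioc 0 β2, β ∈ Ioi (-β2) := fun β hβ => by
    simp only [mem_Ioi]; linarith [hβ.1, hβ2.1]
  simp only [mul_assoc]
  exact setIntegral_Ioc_add_setIntegral_Ioi_le hf2
    (fun n hn => mul_nonneg (sq_nonneg n) (hf_nonneg n hn)) (Real.sqrt_nonneg _)
    (antitoneOn_sqrt_div_add (by positivity) (mem_dom a ha) (mem_dom b hb) hab)
    (monotoneOn_sub_sq_div_two ha_le_one (hb.2.trans hβ2.2) hab)
    (monotoneOn_sub_sq_div_two ha_le_one hβ2.2 ha.2)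

/-- For fixed `β2 ∈ (0,1]` and kink `y1 > 0`, the balanced-budget total expected utility
`β1 ↦ U(β1, β2)` of the concave two-bracket tax is nondecreasing in `β1` on `(0, β2]`. -/
theorem stmt10 (β2 y1 : ℝ) (f : ℝ → ℝ)
    (hβ2 : β2 ∈ Set.Ioc (0:ℝ) 1) (hy1 : 0 < y1)
    (hf_cont : ContinuousOn f (Set.Ioi 0))
    (hf_nonneg : ∀ n ∈ Set.Ioi (0:ℝ), 0 ≤ f n)
    (hf_int : IntegrableOn f (Set.Ioi 0))
    (hf_one : ∫ n in Set.Ioi (0:ℝ), f n = 1)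
    (hf2 : IntegrableOn (fun n => n ^ 2 * f n) (Set.Ioi 0)) :
    MonotoneOn (fun β1 =>
      (∫ n in Set.Ioc (0:ℝ) (Real.sqrt (2 * y1 / (β1 + β2))),
          (β1 - β1 ^ 2 / 2) * n ^ 2 * f n)
      + ∫ n in Set.Ioi (Real.sqrt (2 * y1 / (β1 + β2))),
          (β2 - β2 ^ 2 / 2) * n ^ 2 * f n)
      (Set.Ioc 0 β2) :=
  stmt10_general β2 y1 f hβ2 hy1 hf_nonneg hf2
end
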